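/- Let α ∈ (0, π/2), Δ = Δ(α) and let {T_t}_{t∈Δ} be a C₀-semigroup on a Banach space X. Then the following are equivalent: (1) {T_t}_{t∈Δ} admits a distributionally scrambled set which is residual in X (contains a dense Gδ subset of X); (2) every vector in X \ {0} is distributionally semi-irregular; (3) the whole space X is a distributionally scrambled set for {T_t}_{t∈Δ}. -/

import Mathlib

open MeasureTheory Filter Set

noncomputable section

/-- The complex sector `Δ(α) = {r e^{iθ} : r ≥ 0, |θ| ≤ α}`. -/
def sector (α : ℝ) : Set ℂ := {z : ℂ | |Complex.arg z| ≤ α}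

/-- `Δ_r = {t ∈ Δ(α) : |t| < r}`. -/
def sectorBall (α r : ℝ) : Set ℂ := {z ∈ sector α | ‖z‖ < r}

/-- Upper density of a set `A` with respect to the sector `Δ(α)`. -/
def udens (α : ℝ) (A : Set ℂ) : ℝ :=
  limsup (fun r : ℝ =>
    (volume (A ∩ sectorBall α r)).toReal / (volume (sectorBall α r)).toReal) atTop

/-- Lower density of a set `A` with respect to the sector `Δ(α)`. -/
def ldens (α : ℝ) (A : Set ℂ) : ℝ :=
  liminf (fun r : ℝ =>
    (volume (A ∩ sectorBall α r)).toReal / (volume (sectorBall α r)).toReal) atTop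

/-- The filter expressing `|t| → ∞` along `t ∈ A`. -/
def alongAbs (A : Set ℂ) : Filter ℂ :=
  (atTop.comap (fun z : ℂ => ‖z‖)) ⊓ 𝓟 A

/-- A `C₀`-semigroup of continuous linear operators indexed by the sector `Δ(α)`. -/
structure CZeroSemigroup (α : ℝ) (𝕜 X : Type*) [NontriviallyNormedField 𝕜]
    [NormedAddCommGroup X] [NormedSpace 𝕜 X] where
  T : ℂ → X →L[𝕜] X
  map_zero' : T 0 = ContinuousLinearMap.id 𝕜 X
  map_add' : ∀ s ∈ sector α, ∀ t ∈ sector α, T (s + t) = (T s).comp (T t)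
  cont' : ∀ x : X, ContinuousOn (fun t => T t x) (sector α)

variable {α : ℝ} {𝕜 X : Type*} [NontriviallyNormedField 𝕜]
  [NormedAddCommGroup X] [NormedSpace 𝕜 X]

/-- Distributional sensitivity. -/
def DistSensitive (S : CZeroSemigroup α 𝕜 X) : Prop :=
  ∃ δ > (0:ℝ), ∀ x : X, ∀ ε > (0:ℝ), ∃ y : X, ‖x - y‖ < ε ∧
    udens α {t ∈ sector α | δ < ‖S.T t x - S.T t y‖} = 1

/-- Distributionally unbounded vector. -/
def DistUnbounded (S : CZeroSemigroup α 𝕜 X) (x : X) : Prop :=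
  ∃ A : Set ℂ, A ⊆ sector α ∧ MeasurableSet A ∧ udens α A = 1 ∧
    Tendsto (fun t => ‖S.T t x‖) (alongAbs A) atTop

/-- Distributionally semi-irregular vector. -/
def DistSemiIrregular (S : CZeroSemigroup α 𝕜 X) (x : X) : Prop :=
  ∃ A B : Set ℂ, A ⊆ sector α ∧ B ⊆ sector α ∧ MeasurableSet A ∧ MeasurableSet B ∧
    udens α A = 1 ∧ udens α B = 1 ∧
    Tendsto (fun t => ‖S.T t x‖) (alongAbs A) (nhds 0) ∧
    ∃ δ > (0:ℝ), ∀ t ∈ B, δ ≤ ‖S.T t x‖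

/-- Distributionally irregular vector. -/
def DistIrregular (S : CZeroSemigroup α 𝕜 X) (x : X) : Prop :=
  ∃ A B : Set ℂ, A ⊆ sector α ∧ B ⊆ sector α ∧ MeasurableSet A ∧ MeasurableSet B ∧
    udens α A = 1 ∧ udens α B = 1 ∧
    Tendsto (fun t => ‖S.T t x‖) (alongAbs A) (nhds 0) ∧
    Tendsto (fun t => ‖S.T t x‖) (alongAbs B) atTop

/-- Distributionally chaotic pair. -/
def DistChaoticPair (S : CZeroSemigroup α 𝕜 X) (x y : X) : Prop :=
  ∃ δ > (0:ℝ), ∀ ε > (0:ℝ),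
    udens α {t ∈ sector α | ‖S.T t x - S.T t y‖ < ε} = 1 ∧
    udens α {t ∈ sector α | δ < ‖S.T t x - S.T t y‖} = 1

/-- Distributionally scrambled set. -/
def DistScrambled (S : CZeroSemigroup α 𝕜 X) (K : Set X) : Prop :=
  ∀ x ∈ K, ∀ y ∈ K, x ≠ y → DistChaoticPair S x y


open Topology
open scoped Pointwise

/-!
Since `Δ_r = r • Δ_1` has area proportional to `r²`, bounded parts of the sector have density
zero. Consequently `(x, y)` is a distributionally chaotic pair exactly when `x - y` is
distributionally semi-irregular: given sets of upper density one on which `‖T_t v‖ < 1/(n+1)`,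
a diagonal choice of radii glues them into one set of upper density one along which
`‖T_t v‖ → 0`. This gives (2) ⇔ (3), and (3) ⇒ (1) is trivial. For (1) ⇒ (2), if `G` is a
dense `G_δ` inside the scrambled set and `x ≠ 0`, Baire's theorem gives `w` with `w` and `w + x`
in `G`, and the chaotic pair `(w + x, w)` makes `x` semi-irregular.
-/

lemma measurableSet_sector (α : ℝ) : MeasurableSet (sector α) :=
  Complex.measurable_arg.abs measurableSet_Iic

lemma measurableSet_sectorBall (α r : ℝ) : MeasurableSet (sectorBall α r) :=
  (measurableSet_sector α).inter (measurable_norm measurableSet_Iio)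

lemma measurableSet_sector_sep {g : ℂ → ℝ} (hg : ContinuousOn g (sector α)) {O : Set ℝ}
    (hO : IsOpen O) : MeasurableSet {t ∈ sector α | g t ∈ O} := by
  obtain ⟨U, hU, hUO⟩ := continuousOn_iff'.1 hg O hO
  convert hU.measurableSet.inter (measurableSet_sector α) using 1
  rw [← hUO, inter_comm]
  rfl

lemma volume_sectorBall_lt_top (α r : ℝ) : volume (sectorBall α r) < ⊤ :=
  (Metric.isBounded_ball (x := (0 : ℂ)) (r := r)).subset
    (fun z hz => by simpa using hz.2) |>.measure_lt_top

lemma sectorBall_eq_smul {r : ℝ} (hr : 0 < r) : sectorBall α r = r • sectorBall α 1 := by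
  ext z
  rw [mem_smul_set_iff_inv_smul_mem₀ hr.ne', Complex.real_smul]
  simp only [sectorBall, sector, mem_ofPred_eq, Complex.arg_real_mul z (inv_pos.2 hr), norm_mul,
    Complex.norm_real, Real.norm_eq_abs, abs_inv, abs_of_pos hr, inv_mul_lt_one₀ hr]

lemma volume_sectorBall_one_pos (hα : 0 < α) : 0 < volume (sectorBall α 1) := by
  have hopen : IsOpen (Complex.slitPlane ∩ (fun z => |Complex.arg z|) ⁻¹' Iio α ∩
      Metric.ball 0 1) :=
    (Complex.continuousOn_arg.abs.isOpen_inter_preimage Complex.isOpen_slitPlane isOpen_Iio).inter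
      Metric.isOpen_ball
  refine (hopen.measure_pos volume ⟨1 / 2, ⟨⟨by simp [Complex.slitPlane], by simpa using hα⟩,
    by simp; norm_num⟩⟩).trans_le (measure_mono ?_)
  rintro z ⟨⟨-, hz⟩, hz1⟩
  exact ⟨(show |Complex.arg z| < α from hz).le, by simpa using hz1⟩

lemma volume_sectorBall_toReal {r : ℝ} (hr : 0 < r) :
    (volume (sectorBall α r)).toReal = r ^ 2 * (volume (sectorBall α 1)).toReal := by
  rw [sectorBall_eq_smul hr, Measure.addHaar_smul, Complex.finrank_real_complex,
    ENNReal.toReal_mul, ENNReal.toReal_ofReal (abs_nonneg _), abs_of_nonneg (by positivity)]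

lemma tendsto_volume_sectorBall_toReal_atTop (hα : 0 < α) :
    Tendsto (fun r => (volume (sectorBall α r)).toReal) atTop atTop := by
  have hpos : 0 < (volume (sectorBall α 1)).toReal :=
    ENNReal.toReal_pos (volume_sectorBall_one_pos hα).ne' (volume_sectorBall_lt_top α 1).ne
  refine ((tendsto_pow_atTop two_ne_zero).atTop_mul_const hpos).congr' ?_
  filter_upwards [eventually_gt_atTop 0] with r hr using (volume_sectorBall_toReal hr).symm

lemma tendsto_volume_sectorBall_div_atTop (hα : 0 < α) (b : ℝ) :
    Tendsto (fun r => (volume (sectorBall α b)).toReal / (volume (sectorBall α r)).toReal)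
      atTop (𝓝 0) :=
  tendsto_const_nhds.div_atTop (tendsto_volume_sectorBall_toReal_atTop hα)

def densityRatio (α : ℝ) (A : Set ℂ) (r : ℝ) : ℝ :=
  (volume (A ∩ sectorBall α r)).toReal / (volume (sectorBall α r)).toReal

lemma densityRatio_nonneg (α : ℝ) (A : Set ℂ) (r : ℝ) : 0 ≤ densityRatio α A r := by
  unfold densityRatio; positivity

lemma densityRatio_le_one (α : ℝ) (A : Set ℂ) (r : ℝ) : densityRatio α A r ≤ 1 :=
  div_le_one_of_le₀ (ENNReal.toReal_mono (volume_sectorBall_lt_top α r).ne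
    (measure_mono inter_subset_right)) ENNReal.toReal_nonneg

lemma densityRatio_mono {A B : Set ℂ} (h : A ⊆ B) (r : ℝ) :
    densityRatio α A r ≤ densityRatio α B r :=
  div_le_div_of_nonneg_right (ENNReal.toReal_mono
    (measure_ne_top_of_subset inter_subset_right (volume_sectorBall_lt_top α r).ne)
    (measure_mono (inter_subset_inter_left _ h))) ENNReal.toReal_nonneg

lemma densityRatio_sub_le {A B : Set ℂ} {b r : ℝ}
    (h : A ∩ sectorBall α r ⊆ B ∪ sectorBall α b) :
    densityRatio α A r - (volume (sectorBall α b)).toReal / (volume (sectorBall α r)).toReal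
      ≤ densityRatio α B r := by
  have hB : volume (B ∩ sectorBall α r) ≠ ⊤ :=
    measure_ne_top_of_subset inter_subset_right (volume_sectorBall_lt_top α r).ne
  have hcover : A ∩ sectorBall α r ⊆ (B ∩ sectorBall α r) ∪ sectorBall α b :=
    fun t ht => (h ht).imp (fun htB => ⟨htB, ht.2⟩) id
  have hvol : (volume (A ∩ sectorBall α r)).toReal
      ≤ (volume (B ∩ sectorBall α r)).toReal + (volume (sectorBall α b)).toReal := by
    rw [← ENNReal.toReal_add hB (volume_sectorBall_lt_top α b).ne]
    exact ENNReal.toReal_mono (ENNReal.add_ne_top.2 ⟨hB, (volume_sectorBall_lt_top α b).ne⟩)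
      ((measure_mono hcover).trans (measure_union_le _ _))
  rw [sub_le_iff_le_add, densityRatio, densityRatio, ← add_div]
  exact div_le_div_of_nonneg_right hvol ENNReal.toReal_nonneg

lemma udens_eq_one_iff {A : Set ℂ} :
    udens α A = 1 ↔ ∀ ε > 0, ∃ᶠ r in atTop, 1 - ε < densityRatio α A r := by
  have hbdd : IsBoundedUnder (· ≤ ·) atTop (densityRatio α A) :=
    isBoundedUnder_of ⟨1, densityRatio_le_one α A⟩
  have hcobdd : IsCoboundedUnder (· ≤ ·) atTop (densityRatio α A) :=
    (isBoundedUnder_of ⟨0, densityRatio_nonneg α A⟩).isCoboundedUnder_le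
  change limsup (densityRatio α A) atTop = 1 ↔ _
  constructor
  · intro h ε hε
    exact frequently_lt_of_lt_limsup hcobdd (by linarith)
  · intro h
    refine le_antisymm (limsup_le_of_le hcobdd (.of_forall (densityRatio_le_one α A)))
      (le_of_forall_pos_le_add fun ε hε => ?_)
    have := le_limsup_of_frequently_le ((h ε hε).mono fun r hr => hr.le) hbdd
    linarith

lemma udens_eq_one_mono {A B : Set ℂ} (hAB : A ⊆ B) (hA : udens α A = 1) : udens α B = 1 :=
  udens_eq_one_iff.2 fun ε hε =>
    (udens_eq_one_iff.1 hA ε hε).mono fun r hr => hr.trans_le (densityRatio_mono hAB r)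

lemma eventually_alongAbs_iff {A : Set ℂ} {p : ℂ → Prop} :
    (∀ᶠ t in alongAbs A, p t) ↔ ∃ b : ℝ, ∀ t ∈ A, b ≤ ‖t‖ → p t := by
  simp only [alongAbs, eventually_inf_principal, eventually_comap, eventually_atTop]
  exact ⟨fun ⟨b, hb⟩ => ⟨b, fun t htA ht => hb _ ht t rfl htA⟩,
    fun ⟨b, hb⟩ => ⟨b, fun _ hs t hts htA => hb t htA (hts ▸ hs)⟩⟩

lemma udens_eq_one_of_eventually_alongAbs (hα : 0 < α) {A B : Set ℂ} (hA : udens α A = 1)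
    (hAB : ∀ᶠ t in alongAbs A, t ∈ B) : udens α B = 1 := by
  obtain ⟨b, hb⟩ := eventually_alongAbs_iff.1 hAB
  have hcover : ∀ r, A ∩ sectorBall α r ⊆ B ∪ sectorBall α b := fun r t ⟨htA, hts, _⟩ =>
    (le_or_gt b ‖t‖).imp (hb t htA) fun htb => ⟨hts, htb⟩
  refine udens_eq_one_iff.2 fun ε hε => ?_
  have hsmall := (tendsto_volume_sectorBall_div_atTop hα b).eventually (gt_mem_nhds (half_pos hε))
  refine ((udens_eq_one_iff.1 hA (ε / 2) (half_pos hε)).and_eventually hsmall).mono ?_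
  rintro r ⟨hr, hrb⟩
  linarith [densityRatio_sub_le (hcover r)]

lemma exists_strictMono_tendsto_atTop_of_forall_exists {P : ℕ → ℝ → ℝ → Prop}
    (h : ∀ n ρ, ∃ ρ', ρ + 1 ≤ ρ' ∧ P n ρ ρ') :
    ∃ r : ℕ → ℝ, StrictMono r ∧ Tendsto r atTop atTop ∧ ∀ n, P n (r n) (r (n + 1)) := by
  choose next hnext hP using h
  let r : ℕ → ℝ := fun n => Nat.rec 0 next n
  have hstep (n : ℕ) : r n + 1 ≤ r (n + 1) := hnext n (r n)
  have hlin (n : ℕ) : (n : ℝ) ≤ r n := by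
    induction n with
    | zero => exact le_of_eq (by simp [r])
    | succ n ih => push_cast; linarith [hstep n]
  exact ⟨r, strictMono_nat_of_lt_succ fun n => by linarith [hstep n],
    tendsto_atTop_mono hlin tendsto_natCast_atTop_atTop, fun n => hP n (r n)⟩

/-- The diagonal set `A` follows `C n` on the annulus between the radii `r n` and `r (n + 1)`,
where `r (n + 1)` is chosen so large that `C n` nearly fills `Δ_{r (n+1)}` while `Δ_{r n}` is
negligible in it. -/
theorem exists_udens_eq_one_eventually_mem (hα : 0 < α) {C : ℕ → Set ℂ} (hC : Antitone C)
    (hmeas : ∀ n, MeasurableSet (C n)) (hdens : ∀ n, udens α (C n) = 1) :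
    ∃ A ⊆ sector α, MeasurableSet A ∧ udens α A = 1 ∧ ∀ n, ∀ᶠ t in alongAbs A, t ∈ C n := by
  have hradius (n : ℕ) (ρ : ℝ) : ∃ ρ', ρ + 1 ≤ ρ' ∧
      (volume (sectorBall α ρ)).toReal / (volume (sectorBall α ρ')).toReal < 1 / (n + 1) ∧
      1 - 1 / (n + 1) < densityRatio α (C n) ρ' := by
    have hpos : (0 : ℝ) < 1 / (n + 1) := by positivity
    obtain ⟨ρ', ⟨hρ', hsmall⟩, hlarge⟩ := (((eventually_ge_atTop (ρ + 1)).and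
      ((tendsto_volume_sectorBall_div_atTop hα ρ).eventually (gt_mem_nhds hpos))).and_frequently
      (udens_eq_one_iff.1 (hdens n) _ hpos)).exists
    exact ⟨ρ', hρ', hsmall, hlarge⟩
  obtain ⟨r, hr_mono, hr_tendsto, hr⟩ := exists_strictMono_tendsto_atTop_of_forall_exists hradius
  let A := ⋃ n, (C n ∩ sectorBall α (r (n + 1))) \ sectorBall α (r n)
  refine ⟨A, iUnion_subset fun n t ht => ht.1.2.1, .iUnion fun n =>
    ((hmeas n).inter (measurableSet_sectorBall _ _)).diff (measurableSet_sectorBall _ _), ?_, ?_⟩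
  · refine udens_eq_one_iff.2 fun ε hε => ?_
    have hlarge : ∀ᶠ n : ℕ in atTop, 2 / ((n : ℝ) + 1) < ε :=
      (tendsto_const_div_atTop_nhds_zero_nat 2 |>.comp (tendsto_add_atTop_nat 1)).eventually
        (gt_mem_nhds hε) |>.mono fun n hn => by simpa using hn
    refine (hr_tendsto.comp (tendsto_add_atTop_nat 1)).frequently
      (hlarge.mono fun n hn => ?_).frequently
    have hcover : C n ∩ sectorBall α (r (n + 1)) ⊆ A ∪ sectorBall α (r n) := fun t ht =>
      (em (t ∈ sectorBall α (r n))).elim Or.inr fun hnot => Or.inl (mem_iUnion.2 ⟨n, ht, hnot⟩)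
    show 1 - ε < densityRatio α A (r (n + 1))
    linarith [densityRatio_sub_le hcover, (hr n).1, (hr n).2,
      show 2 / ((n : ℝ) + 1) = 1 / (n + 1) + 1 / (n + 1) by ring]
  · intro N
    refine eventually_alongAbs_iff.2 ⟨r N, fun t htA hNt => ?_⟩
    obtain ⟨n, ⟨htC, -, htr⟩, -⟩ := mem_iUnion.1 htA
    exact hC (Nat.lt_succ_iff.1 (hr_mono.lt_iff_lt.1 (hNt.trans_lt htr))) htC

lemma IsGδ.exists_mem_add_mem {G : Type*} [TopologicalSpace G] [BaireSpace G] [AddGroup G]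
    [ContinuousAdd G] {s : Set G} (hs : IsGδ s) (hd : Dense s) (x : G) :
    ∃ w ∈ s, w + x ∈ s :=
  (hd.inter_of_Gδ hs (hs.preimage (continuous_add_const x))
    (hd.preimage (Homeomorph.addRight x).isOpenMap)).nonempty

theorem distSemiIrregular_iff (hα : 0 < α) (S : CZeroSemigroup α 𝕜 X) (v : X) :
    DistSemiIrregular S v ↔
      (∀ ε > 0, udens α {t ∈ sector α | ‖S.T t v‖ < ε} = 1) ∧
        ∃ δ > 0, udens α {t ∈ sector α | δ < ‖S.T t v‖} = 1 := by
  have hcont : ContinuousOn (fun t => ‖S.T t v‖) (sector α) := (S.cont' v).norm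
  constructor
  · rintro ⟨A, B, hA, hB, -, -, hAdens, hBdens, hA0, δ, hδ, hδB⟩
    refine ⟨fun ε hε => udens_eq_one_of_eventually_alongAbs hα hAdens ?_,
      δ / 2, half_pos hδ, udens_eq_one_mono (fun t ht => ⟨hB ht, by linarith [hδB t ht]⟩) hBdens⟩
    filter_upwards [hA0 (Iio_mem_nhds hε), mem_inf_of_right (mem_principal_self A)]
      with t hsmall htA using ⟨hA htA, hsmall⟩
  · rintro ⟨hsmall, δ, hδ, hlarge⟩
    let C : ℕ → Set ℂ := fun n => {t ∈ sector α | ‖S.T t v‖ < 1 / (n + 1)}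
    have hC : Antitone C := fun m n hmn t ⟨hts, ht⟩ =>
      ⟨hts, ht.trans_le (one_div_le_one_div_of_le (by positivity) (by gcongr))⟩
    obtain ⟨A, hA, hAmeas, hAdens, hAC⟩ := exists_udens_eq_one_eventually_mem hα hC
      (fun n => measurableSet_sector_sep hcont isOpen_Iio) (fun n => hsmall _ (by positivity))
    refine ⟨A, _, hA, fun t ht => ht.1, hAmeas, measurableSet_sector_sep hcont isOpen_Ioi,
      hAdens, hlarge, ?_, δ, hδ, fun t ht => ht.2.le⟩
    refine tendsto_order.2 ⟨fun a ha => .of_forall fun t => ha.trans_le (norm_nonneg _),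
      fun ε hε => ?_⟩
    obtain ⟨n, hn⟩ := exists_nat_one_div_lt hε
    exact (hAC n).mono fun t ht => ht.2.trans hn

theorem distChaoticPair_iff_distSemiIrregular_sub (hα : 0 < α) (S : CZeroSemigroup α 𝕜 X)
    (x y : X) : DistChaoticPair S x y ↔ DistSemiIrregular S (x - y) := by
  simp_rw [distSemiIrregular_iff hα, DistChaoticPair, ← map_sub]
  exact ⟨fun ⟨δ, hδ, h⟩ => ⟨fun ε hε => (h ε hε).1, δ, hδ, (h 1 one_pos).2⟩,
    fun ⟨hsmall, δ, hδ, hlarge⟩ => ⟨δ, hδ, fun ε hε => ⟨hsmall ε hε, hlarge⟩⟩⟩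

theorem stmt_13_general (α : ℝ) (hα : 0 < α)
    {𝕜 X : Type*} [NontriviallyNormedField 𝕜] [NormedAddCommGroup X] [NormedSpace 𝕜 X]
    [CompleteSpace X] (S : CZeroSemigroup α 𝕜 X) :
    ((∃ K : Set X, DistScrambled S K ∧ ∃ G ⊆ K, IsGδ G ∧ Dense G) ↔
      (∀ x : X, x ≠ 0 → DistSemiIrregular S x)) ∧
    ((∃ K : Set X, DistScrambled S K ∧ ∃ G ⊆ K, IsGδ G ∧ Dense G) ↔
      DistScrambled S (Set.univ : Set X)) := by
  have residual_of_univ (h : DistScrambled S (Set.univ : Set X)) :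
      ∃ K : Set X, DistScrambled S K ∧ ∃ G ⊆ K, IsGδ G ∧ Dense G :=
    ⟨univ, h, univ, subset_rfl, .univ, dense_univ⟩
  have univ_of_semiIrregular (h : ∀ x : X, x ≠ 0 → DistSemiIrregular S x) :
      DistScrambled S (Set.univ : Set X) := fun x _ y _ hxy =>
    (distChaoticPair_iff_distSemiIrregular_sub hα S x y).2 (h _ (sub_ne_zero.2 hxy))
  have semiIrregular_of_residual :
      (∃ K : Set X, DistScrambled S K ∧ ∃ G ⊆ K, IsGδ G ∧ Dense G) →
        ∀ x : X, x ≠ 0 → DistSemiIrregular S x := by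
    rintro ⟨K, hK, G, hGK, hGδ, hGdense⟩ x hx
    obtain ⟨w, hw, hwx⟩ := hGδ.exists_mem_add_mem hGdense x
    have hpair := hK _ (hGK hwx) _ (hGK hw) (by simpa using hx)
    simpa using (distChaoticPair_iff_distSemiIrregular_sub hα S _ _).1 hpair
  exact ⟨⟨semiIrregular_of_residual, fun h => residual_of_univ (univ_of_semiIrregular h)⟩,
    fun h => univ_of_semiIrregular (semiIrregular_of_residual h), residual_of_univ⟩

/-- A residual distributionally scrambled set forces the whole space to be scrambled. -/
theorem stmt_13 (α : ℝ) (hα : 0 < α) (hα' : α < Real.pi / 2)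
    {𝕜 X : Type*} [NontriviallyNormedField 𝕜] [NormedAddCommGroup X] [NormedSpace 𝕜 X]
    [CompleteSpace X] (S : CZeroSemigroup α 𝕜 X) :
    ((∃ K : Set X, DistScrambled S K ∧ ∃ G ⊆ K, IsGδ G ∧ Dense G) ↔
      (∀ x : X, x ≠ 0 → DistSemiIrregular S x)) ∧
    ((∃ K : Set X, DistScrambled S K ∧ ∃ G ⊆ K, IsGδ G ∧ Dense G) ↔
      DistScrambled S (Set.univ : Set X)) :=
  stmt_13_general α hα S
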